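/- arXiv:2601.22017 — 3 statements merged into one kernel-verified Lean document; each statement's English description precedes it below -/
import Mathlib

section
/- Let C be an abelian monoidal category in which every object has a left dual and whose tensor unit is a simple object, let D be an abelian monoidal category whose tensor product is additive in each variable and whose tensor unit is not a zero object, and let F : C → D be a strong monoidal functor that preserves finite limits and finite colimits. Then F reflects zero objects: for every object X of C, if F(X) is a zero object then X is a zero object. -/
/-!
Statement 0: Let `C` be an abelian monoidal category in which every object has a left dual
(in the convention `ev : X* ⊗ X ⟶ 𝟙`, `coev : 𝟙 ⟶ X ⊗ X*`, which is Mathlib's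
`RightRigidCategory`) and whose tensor unit is simple; let `D` be an abelian monoidal
category whose tensor product is additive in each variable (`MonoidalPreadditive`) and whose
tensor unit is not a zero object, and let `F : C ⥤ D` be a strong monoidal functor preserving
finite limits and finite colimits.  Then `F` reflects zero objects.
-/

open CategoryTheory CategoryTheory.Limits MonoidalCategory

theorem stmt0 {C : Type*} {D : Type*} [Category C] [Category D]
    [MonoidalCategory C] [MonoidalCategory D] [Abelian C] [Abelian D]
    [RightRigidCategory C] [Simple (𝟙_ C)]
    [MonoidalPreadditive D] (hD : ¬ IsZero (𝟙_ D))
    (F : C ⥤ D) [F.Monoidal]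
    [PreservesFiniteLimits F] [PreservesFiniteColimits F]
    (X : C) (hX : IsZero (F.obj X)) : IsZero X := by
  by_contra h
  -- the coevaluation is nonzero, since it is part of a snake identity exhibiting `𝟙 X`
  have hcoev : (η_ X Xᘁ) ≠ 0 := by
    intro hz
    apply h
    rw [IsZero.iff_id_eq_zero]
    calc 𝟙 X = (λ_ X).inv ≫ (η_ X Xᘁ ▷ X ≫ (α_ _ _ _).hom ≫ X ◁ ε_ X Xᘁ) ≫ (ρ_ X).hom := by
          rw [ExactPairing.evaluation_coevaluation]; simp
      _ = 0 := by
          haveI : (tensorRight X).IsLeftAdjoint :=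
            (tensorRightAdjunction X Xᘁ).isLeftAdjoint
          have hw : (0 : 𝟙_ C ⟶ X ⊗ Xᘁ) ▷ X = 0 := by
            simpa using (tensorRight X).map_zero (𝟙_ C) (X ⊗ Xᘁ)
          rw [hz, hw]; simp
  -- a nonzero map out of a simple object is mono
  haveI : Mono (η_ X Xᘁ) := mono_of_nonzero_from_simple hcoev
  haveI : Mono (F.map (η_ X Xᘁ)) := F.map_mono _
  -- `F (X ⊗ Xᘁ)` is zero since `F X` is
  have hz2 : IsZero (F.obj (X ⊗ Xᘁ)) := by
    have hzt : IsZero (F.obj X ⊗ F.obj Xᘁ) := by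
      rw [IsZero.iff_id_eq_zero]
      have : 𝟙 (F.obj X) = 0 := hX.eq_of_src _ _
      rw [← MonoidalCategory.id_whiskerRight, this, MonoidalPreadditive.zero_whiskerRight]
    exact hzt.of_iso (Functor.Monoidal.μIso F X Xᘁ).symm
  -- hence `F (𝟙_ C)` is zero, being a mono into a zero object
  have hunit : IsZero (F.obj (𝟙_ C)) := by
    rw [IsZero.iff_id_eq_zero, ← cancel_mono (F.map (η_ X Xᘁ))]
    exact hz2.eq_of_tgt _ _
  exact hD (hunit.of_iso (Functor.Monoidal.εIso F))
end

section
/- Let A and B be rings and φ : A → B a ring homomorphism. The restriction-of-scalars functor Res_φ from the category of left B-modules to the category of left A-modules is an equivalence of categories if and only if φ is bijective (i.e., an isomorphism of rings). -/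
/-!
Statement 11: For rings `A`, `B` and a ring homomorphism `φ : A →+* B`, the
restriction-of-scalars functor `ModuleCat B ⥤ ModuleCat A` is an equivalence of categories
if and only if `φ` is bijective (i.e. an isomorphism of rings).
-/

open CategoryTheory

universe u

/-- `B` viewed as an element of the `A`-module obtained from `B` by restriction of scalars. -/
def stmt11_toRB {A : Type u} {B : Type u} [Ring A] [Ring B] (φ : A →+* B) (b : B) :
    (ModuleCat.restrictScalars.{u} φ).obj (ModuleCat.of B B) := b

lemma stmt11_smul_toRB {A : Type u} {B : Type u} [Ring A] [Ring B] (φ : A →+* B)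
    (x : A) (b : B) : x • stmt11_toRB φ b = stmt11_toRB φ (φ x * b) := rfl

lemma stmt11_toRB_inj {A : Type u} {B : Type u} [Ring A] [Ring B] (φ : A →+* B)
    {b b' : B} (h : stmt11_toRB φ b = stmt11_toRB φ b') : b = b' := h

/-- The counit of the restrict/coextend adjunction evaluates a linear map at `1`. -/
lemma stmt11_counit_apply {A : Type u} {B : Type u} [Ring A] [Ring B] (φ : A →+* B)
    (X : ModuleCat.{u} A)
    (g : ((ModuleCat.restrictScalars.{u} φ).obj (ModuleCat.of B B)) →ₗ[A] X) :
    ((ModuleCat.restrictCoextendScalarsAdj.{u, u, u} φ).counit.app X) g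
      = g (stmt11_toRB φ 1) := rfl

/-- The counit of the restrict/coextend adjunction is bijective at each object when
restriction of scalars is an equivalence. -/
lemma stmt11_counit_bijective {A : Type u} {B : Type u} [Ring A] [Ring B] (φ : A →+* B)
    (h : (ModuleCat.restrictScalars.{u} φ).IsEquivalence) (X : ModuleCat.{u} A) :
    Function.Bijective
      ((ModuleCat.restrictCoextendScalarsAdj.{u, u, u} φ).counit.app X) := by
  have : IsIso ((ModuleCat.restrictCoextendScalarsAdj.{u, u, u} φ).counit.app X) :=
    (ModuleCat.restrictCoextendScalarsAdj.{u, u, u} φ).isIso_counit_app_of_iso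
      ((ModuleCat.restrictScalars.{u} φ).objObjPreimageIso X).symm
  exact ConcreteCategory.bijective_of_isIso
    ((ModuleCat.restrictCoextendScalarsAdj.{u, u, u} φ).counit.app X)

theorem stmt11 {A : Type u} {B : Type u} [Ring A] [Ring B] (φ : A →+* B) :
    (ModuleCat.restrictScalars.{u} φ).IsEquivalence ↔ Function.Bijective φ := by
  constructor
  · intro h
    constructor
    · -- injectivity of φ, from surjectivity of the counit at `A`
      obtain ⟨g, hg⟩ := (stmt11_counit_bijective φ h (ModuleCat.of A A)).2 (1 : A)
      let g' : ((ModuleCat.restrictScalars.{u} φ).obj (ModuleCat.of B B)) →ₗ[A] A := g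
      have hg1 : g' (stmt11_toRB φ 1) = 1 := hg
      intro a a' haa
      have key : ∀ x : A, g' (stmt11_toRB φ (φ x)) = x := by
        intro x
        have hx : stmt11_toRB φ (φ x) = x • stmt11_toRB φ 1 := by
          rw [stmt11_smul_toRB, mul_one]
        rw [hx, g'.map_smul x (stmt11_toRB φ 1), hg1, smul_eq_mul, mul_one]
      have hk := key a
      rw [haa, key a'] at hk
      exact hk.symm
    · -- surjectivity of φ, from injectivity of the counit at `RB ⧸ range φ`
      set l : A →ₗ[A] ((ModuleCat.restrictScalars.{u} φ).obj (ModuleCat.of B B)) :=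
        { toFun := fun a => stmt11_toRB φ (φ a)
          map_add' := fun a b => by
            show stmt11_toRB φ (φ (a + b)) = stmt11_toRB φ (φ a + φ b)
            rw [map_add]
          map_smul' := fun a b => by
            show stmt11_toRB φ (φ (a * b)) = a • stmt11_toRB φ (φ b)
            rw [stmt11_smul_toRB, map_mul] } with hl
      set Q := ModuleCat.of A
        (((ModuleCat.restrictScalars.{u} φ).obj (ModuleCat.of B B)) ⧸ LinearMap.range l) with hQ
      set π : ((ModuleCat.restrictScalars.{u} φ).obj (ModuleCat.of B B)) →ₗ[A] Q :=
        Submodule.mkQ (LinearMap.range l) with hπ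
      have hi := (stmt11_counit_bijective φ h Q).1
      have hπ1 : ((ModuleCat.restrictCoextendScalarsAdj.{u, u, u} φ).counit.app Q) π
          = ((ModuleCat.restrictCoextendScalarsAdj.{u, u, u} φ).counit.app Q)
              ((0 : ((ModuleCat.restrictScalars.{u} φ).obj (ModuleCat.of B B)) →ₗ[A] Q) :
                ((ModuleCat.restrictScalars.{u} φ).obj
                  ((ModuleCat.coextendScalars.{u, u, u} φ).obj Q))) := by
        rw [stmt11_counit_apply φ Q π, stmt11_counit_apply φ Q
          (0 : ((ModuleCat.restrictScalars.{u} φ).obj (ModuleCat.of B B)) →ₗ[A] Q),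
          LinearMap.zero_apply, hπ]
        exact (Submodule.Quotient.mk_eq_zero _).mpr ⟨1, by simp [hl]⟩
      have hπ0 : π = (0 : ((ModuleCat.restrictScalars.{u} φ).obj (ModuleCat.of B B)) →ₗ[A] Q) :=
        hi hπ1
      intro b
      have hb0 : π (stmt11_toRB φ b) = 0 := by rw [hπ0]; rfl
      have hb : stmt11_toRB φ b ∈ LinearMap.range l := by
        rw [hπ] at hb0
        exact (Submodule.Quotient.mk_eq_zero _).mp hb0
      obtain ⟨a, ha⟩ := hb
      exact ⟨a, stmt11_toRB_inj φ ha⟩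
  · intro h
    exact ModuleCat.restrictScalars_isEquivalence_of_ringEquiv (RingEquiv.ofBijective φ h)
end

section
/- Let k be a field, H a bialgebra over k with comultiplication Δ and counit ε, and let J and L be invertible elements of the algebra H ⊗ H, each satisfying the 2-cocycle identity ((id ⊗ Δ)(W)) · (1 ⊗ W) = ((Δ ⊗ id)(W)) · (W ⊗ 1) in H ⊗ H ⊗ H (for W = J and W = L). Then the k-linear map ᴸΔᴶ : H → H ⊗ H defined by ᴸΔᴶ(h) = L⁻¹ · Δ(h) · J is coassociative, i.e., (id ⊗ ᴸΔᴶ) ∘ ᴸΔᴶ = (ᴸΔᴶ ⊗ id) ∘ ᴸΔᴶ up to the canonical associativity isomorphism of tensor products. If, moreover, J and L are normalized, i.e., (ε ⊗ id)(J) = 1 = (id ⊗ ε)(J) and (ε ⊗ id)(L) = 1 = (id ⊗ ε)(L), then ε is a counit for ᴸΔᴶ, so that (H, ᴸΔᴶ, ε) is a coalgebra over k. -/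
/-!
The maps `f = id ⊗ Δ`, `g = assoc ∘ (Δ ⊗ id)`, `p = 1 ⊗ -` and `q = assoc ∘ (- ⊗ 1)` are algebra
maps `H ⊗ H → H ⊗ (H ⊗ H)`, and the two sides of coassociativity of `ᴸΔᴶ` at `h` are
`p(L⁻¹) f(L⁻¹) f(Δh) f(J) p(J)` and `q(L⁻¹) g(L⁻¹) g(Δh) g(J) q(J)`. The cocycle identity reads
`f(W) p(W) = g(W) q(W)`; for `W = J` it matches the right ends, for `W = L` it inverts to
`p(L⁻¹) f(L⁻¹) = q(L⁻¹) g(L⁻¹)`, and `f(Δh) = g(Δh)` is coassociativity of `Δ`. Likewise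
`ε ⊗ id` and `id ⊗ ε` are algebra maps sending normalized `J`, `L` to `1`, so on `ᴸΔᴶ(h)` they
see only `Δh`.
-/

open TensorProduct

universe u v

variable (k : Type u) (H : Type v) [Field k] [Ring H] [Bialgebra k H]

/-- The Hopf 2-cocycle identity
`((id ⊗ Δ)(W)) · (1 ⊗ W) = ((Δ ⊗ id)(W)) · (W ⊗ 1)` in `H ⊗ H ⊗ H`
(the right-hand side is transported along the canonical associativity isomorphism). -/
def IsTwoCocycle (W : H ⊗[k] H) : Prop :=
  (LinearMap.lTensor H (Coalgebra.comul (R := k) (A := H))) W * ((1 : H) ⊗ₜ[k] W) =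
    (TensorProduct.assoc k H H H)
        ((LinearMap.rTensor H (Coalgebra.comul (R := k) (A := H))) W) *
      (TensorProduct.assoc k H H H) (W ⊗ₜ[k] (1 : H))

/-- Normalization of an element `W` of `H ⊗ H`: `(ε ⊗ id)(W) = 1 = (id ⊗ ε)(W)`. -/
def IsNormalized (W : H ⊗[k] H) : Prop :=
  (TensorProduct.lid k H) ((LinearMap.rTensor H (Coalgebra.counit (R := k) (A := H))) W) = 1 ∧
  (TensorProduct.rid k H) ((LinearMap.lTensor H (Coalgebra.counit (R := k) (A := H))) W) = 1

/-- The twisted comultiplication `ᴸΔᴶ : H →ₗ[k] H ⊗ H`, `h ↦ L⁻¹ · Δ(h) · J`. -/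
noncomputable def twistedComul (J L : H ⊗[k] H) [Invertible L] : H →ₗ[k] H ⊗[k] H :=
  (LinearMap.mulRight k J) ∘ₗ (LinearMap.mulLeft k (⅟L)) ∘ₗ
    (Coalgebra.comul (R := k) (A := H))


section Twist

variable {F M N : Type*} [Monoid M] [Monoid N] [FunLike F M N] [MonoidHomClass F M N]

theorem map_invOf_mul_mul_eq_of_map_eq_one (φ : F) {J L : M} [Invertible L]
    (hJ : φ J = 1) (hL : φ L = 1) (x : M) : φ (⅟L * x * J) = φ x := by
  have hLinv : φ (⅟L) = 1 :=
    calc φ (⅟L) = φ (⅟L) * φ L := by rw [hL, mul_one]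
      _ = 1 := by rw [← map_mul, invOf_mul_self, map_one]
  rw [map_mul, map_mul, hLinv, hJ, one_mul, mul_one]

theorem map_invOf_mul_map_invOf_eq (f g p q : F) {L : M} [Invertible L]
    (hL : f L * p L = g L * q L) : p (⅟L) * f (⅟L) = q (⅟L) * g (⅟L) := by
  -- both sides are inverses of `f L * p L = g L * q L`
  refine left_inv_eq_right_inv (a := g L * q L) ?_ ?_
  · rw [← hL, mul_assoc, ← mul_assoc (f _), ← map_mul, invOf_mul_self, map_one, one_mul,
      ← map_mul, invOf_mul_self, map_one]
  · rw [mul_assoc, ← mul_assoc (q L), ← map_mul, mul_invOf_self, map_one, one_mul,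
      ← map_mul, mul_invOf_self, map_one]

theorem map_invOf_mul_mul_conj_eq (f g p q : F) {J L : M} [Invertible L]
    (hJ : f J * p J = g J * q J) (hL : f L * p L = g L * q L) {x : M} (hx : f x = g x) :
    p (⅟L) * f (⅟L * x * J) * p J = q (⅟L) * g (⅟L * x * J) * q J := by
  have hLinv := map_invOf_mul_map_invOf_eq f g p q hL
  calc p (⅟L) * f (⅟L * x * J) * p J = (p (⅟L) * f (⅟L)) * f x * (f J * p J) := by
        simp only [map_mul, mul_assoc]
    _ = (q (⅟L) * g (⅟L)) * g x * (g J * q J) := by rw [hLinv, hx, hJ]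
    _ = q (⅟L) * g (⅟L * x * J) * q J := by simp only [map_mul, mul_assoc]

end Twist

section TensorMul

variable {R A B : Type*} [CommSemiring R] [Semiring A] [Semiring B] [Algebra R A] [Algebra R B]

theorem lTensor_mulLeft_apply (b : B) (x : A ⊗[R] B) :
    (LinearMap.mulLeft R b).lTensor A x = ((1 : A) ⊗ₜ b) * x := by
  induction x with
  | zero => simp
  | tmul a c => simp
  | add x y hx hy => simp [hx, hy, mul_add]

theorem lTensor_mulRight_apply (b : B) (x : A ⊗[R] B) :
    (LinearMap.mulRight R b).lTensor A x = x * ((1 : A) ⊗ₜ b) := by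
  induction x with
  | zero => simp
  | tmul a c => simp
  | add x y hx hy => simp [hx, hy, add_mul]

theorem rTensor_mulLeft_apply (a : A) (x : A ⊗[R] B) :
    (LinearMap.mulLeft R a).rTensor B x = (a ⊗ₜ (1 : B)) * x := by
  induction x with
  | zero => simp
  | tmul a c => simp
  | add x y hx hy => simp [hx, hy, mul_add]

theorem rTensor_mulRight_apply (a : A) (x : A ⊗[R] B) :
    (LinearMap.mulRight R a).rTensor B x = x * (a ⊗ₜ (1 : B)) := by
  induction x with
  | zero => simp
  | tmul a c => simp
  | add x y hx hy => simp [hx, hy, add_mul]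

end TensorMul

section Bialgebra

variable {R A : Type*} [CommSemiring R] [Semiring A] [Bialgebra R A]

theorem lTensor_comul_eq_map :
    (Coalgebra.comul (R := R) (A := A)).lTensor A =
      (Algebra.TensorProduct.map (AlgHom.id R A) (Bialgebra.comulAlgHom R A)).toLinearMap :=
  rfl

theorem rTensor_comul_eq_map :
    (Coalgebra.comul (R := R) (A := A)).rTensor A =
      (Algebra.TensorProduct.map (Bialgebra.comulAlgHom R A) (AlgHom.id R A)).toLinearMap :=
  rfl

end Bialgebra

theorem lTensor_twistedComul_apply (J L : H ⊗[k] H) [Invertible L] (x : H ⊗[k] H) :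
    (twistedComul k H J L).lTensor H x =
      ((1 : H) ⊗ₜ ⅟L) * Algebra.TensorProduct.map (AlgHom.id k H) (Bialgebra.comulAlgHom k H) x *
        ((1 : H) ⊗ₜ J) := by
  rw [twistedComul, LinearMap.lTensor_comp, LinearMap.lTensor_comp, LinearMap.comp_apply,
    LinearMap.comp_apply, lTensor_mulRight_apply, lTensor_mulLeft_apply, lTensor_comul_eq_map]
  rfl

theorem rTensor_twistedComul_apply (J L : H ⊗[k] H) [Invertible L] (x : H ⊗[k] H) :
    (twistedComul k H J L).rTensor H x =
      (⅟L ⊗ₜ (1 : H)) * Algebra.TensorProduct.map (Bialgebra.comulAlgHom k H) (AlgHom.id k H) x *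
        (J ⊗ₜ (1 : H)) := by
  rw [twistedComul, LinearMap.rTensor_comp, LinearMap.rTensor_comp, LinearMap.comp_apply,
    LinearMap.comp_apply, rTensor_mulRight_apply, rTensor_mulLeft_apply, rTensor_comul_eq_map]
  rfl

theorem twistedComul_coassoc (J L : H ⊗[k] H) [Invertible L]
    (hJ : IsTwoCocycle k H J) (hL : IsTwoCocycle k H L) :
    (twistedComul k H J L).lTensor H ∘ₗ twistedComul k H J L =
      (TensorProduct.assoc k H H H).toLinearMap ∘ₗ
        (twistedComul k H J L).rTensor H ∘ₗ twistedComul k H J L := by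
  let α := (Algebra.TensorProduct.assoc k k k H H H).toAlgHom
  let f := Algebra.TensorProduct.map (AlgHom.id k H) (Bialgebra.comulAlgHom k H)
  let g := α.comp (Algebra.TensorProduct.map (Bialgebra.comulAlgHom k H) (AlgHom.id k H))
  let p : H ⊗[k] H →ₐ[k] H ⊗[k] (H ⊗[k] H) := Algebra.TensorProduct.includeRight
  let q := α.comp Algebra.TensorProduct.includeLeft
  -- With `id ⊗ Δ` and `Δ ⊗ id` read as algebra maps, the cocycle identity is this equation.
  have hcocycle : ∀ W, IsTwoCocycle k H W → f W * p W = g W * q W := fun _ hW => hW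
  ext h
  have hcoassoc : f (Coalgebra.comul h) = g (Coalgebra.comul h) :=
    (Coalgebra.coassoc_apply h).symm
  rw [LinearMap.comp_apply, LinearMap.comp_apply, LinearMap.comp_apply,
    lTensor_twistedComul_apply, rTensor_twistedComul_apply, LinearEquiv.coe_coe]
  change _ = α _
  rw [map_mul α, map_mul α]
  exact map_invOf_mul_mul_conj_eq f g p q (hcocycle J hJ) (hcocycle L hL) hcoassoc

theorem lid_comp_rTensor_counit_comp_twistedComul (J L : H ⊗[k] H) [Invertible L]
    (hJ : IsNormalized k H J) (hL : IsNormalized k H L) :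
    (TensorProduct.lid k H).toLinearMap ∘ₗ (Coalgebra.counit (R := k) (A := H)).rTensor H ∘ₗ
      twistedComul k H J L = LinearMap.id := by
  let ε₁ := (Algebra.TensorProduct.lid k H).toAlgHom.comp
    (Algebra.TensorProduct.map (Bialgebra.counitAlgHom k H) (AlgHom.id k H))
  ext h
  calc ε₁ (⅟L * Coalgebra.comul h * J) = ε₁ (Coalgebra.comul h) :=
        map_invOf_mul_mul_eq_of_map_eq_one ε₁ hJ.1 hL.1 _
    _ = TensorProduct.lid k H ((Coalgebra.counit (R := k) (A := H)).rTensor H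
          (Coalgebra.comul h)) := rfl
    _ = h := by simp

theorem rid_comp_lTensor_counit_comp_twistedComul (J L : H ⊗[k] H) [Invertible L]
    (hJ : IsNormalized k H J) (hL : IsNormalized k H L) :
    (TensorProduct.rid k H).toLinearMap ∘ₗ (Coalgebra.counit (R := k) (A := H)).lTensor H ∘ₗ
      twistedComul k H J L = LinearMap.id := by
  let ε₂ := (Algebra.TensorProduct.rid k k H).toAlgHom.comp
    (Algebra.TensorProduct.map (AlgHom.id k H) (Bialgebra.counitAlgHom k H))
  ext h
  calc ε₂ (⅟L * Coalgebra.comul h * J) = ε₂ (Coalgebra.comul h) :=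
        map_invOf_mul_mul_eq_of_map_eq_one ε₂ hJ.2 hL.2 _
    _ = TensorProduct.rid k H ((Coalgebra.counit (R := k) (A := H)).lTensor H
          (Coalgebra.comul h)) := rfl
    _ = h := by simp

theorem stmt13 (J L : H ⊗[k] H) [Invertible L]
    (hJ : IsTwoCocycle k H J) (hL : IsTwoCocycle k H L) :
    ((LinearMap.lTensor H (twistedComul k H J L)) ∘ₗ twistedComul k H J L =
      (TensorProduct.assoc k H H H).toLinearMap ∘ₗ
        (LinearMap.rTensor H (twistedComul k H J L)) ∘ₗ twistedComul k H J L) ∧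
    (IsNormalized k H J → IsNormalized k H L →
      ((TensorProduct.lid k H).toLinearMap ∘ₗ
          (LinearMap.rTensor H (Coalgebra.counit (R := k) (A := H))) ∘ₗ
            twistedComul k H J L = LinearMap.id ∧
        (TensorProduct.rid k H).toLinearMap ∘ₗ
          (LinearMap.lTensor H (Coalgebra.counit (R := k) (A := H))) ∘ₗ
            twistedComul k H J L = LinearMap.id)) :=
  ⟨twistedComul_coassoc k H J L hJ hL, fun hJn hLn =>
    ⟨lid_comp_rTensor_counit_comp_twistedComul k H J L hJn hLn,
      rid_comp_lTensor_counit_comp_twistedComul k H J L hJn hLn⟩⟩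
end
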